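/- Let G = (V,E) be a nontrivial graph with V = {v_1,…,v_n} and E = {e_1,…,e_m}, and let H be the graph constructed from G as follows: the vertex set of H is V_1 ∪ V_2 ∪ E_1 ∪ E_2 ∪ A ∪ B ∪ C ∪ F, where V_k = {v_i^k : i ∈ [n]} and E_k = {e_j^k : j ∈ [m]} for k ∈ [2], A = {a_i : i ∈ [n]}, B = {b_i : i ∈ [n]}, C = {c_i : i ∈ [n]}, F = {f_i : i ∈ [n]}; the edge set of H consists of the edges v_i^1 f_i, v_i^2 f_i, a_i b_i, b_i c_i, a_i f_i for each i ∈ [n], together with the edges v_p^k e_i^k and v_q^k e_i^k for each k ∈ [2] and each i ∈ [m] such that v_p and v_q are the endpoints of the edge e_i in G. Then, for every positive integer k, the graph G has a vertex cover of cardinality at most k if and only if H has a semipaired dominating set of cardinality at most 2n + 2k. -/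

import Mathlib

/-- `D` is a dominating set of `G`. -/
def IsDomSet {V : Type*} (G : SimpleGraph V) (D : Finset V) : Prop :=
  ∀ v, v ∉ D → ∃ u ∈ D, G.Adj u v

/-- `D` is a semipaired dominating set of `G`: a dominating set that can be partitioned
into 2-element subsets (given by a fixed-point-free involution on `D`) such that the two
vertices in each pair are at distance at most 2 (adjacent or having a common neighbor). -/
def IsSemiPD {V : Type*} (G : SimpleGraph V) (D : Finset V) : Prop :=
  IsDomSet G D ∧ ∃ f : V → V, ∀ v ∈ D, f v ∈ D ∧ f v ≠ v ∧ f (f v) = v ∧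
    (G.Adj v (f v) ∨ ∃ w, G.Adj v w ∧ G.Adj (f v) w)

/-- Vertices of the graph `H` constructed from a graph `G` with `n` vertices and `m`
enumerated edges. -/
inductive HV (n m : ℕ) where
  | v1 : Fin n → HV n m
  | v2 : Fin n → HV n m
  | e1 : Fin m → HV n m
  | e2 : Fin m → HV n m
  | a : Fin n → HV n m
  | b : Fin n → HV n m
  | c : Fin n → HV n m
  | f : Fin n → HV n m
deriving DecidableEq

/-- The defining relation of `H`, given the endpoint functions `p q : Fin m → Fin n`
of the enumerated edges of `G`: the edges are `v_i^1 f_i`, `v_i^2 f_i`, `a_i b_i`,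
`b_i c_i`, `a_i f_i` for each `i`, together with `v_{p j}^k e_j^k` and `v_{q j}^k e_j^k`
for `k = 1, 2` and each edge index `j`. -/
def hRel {n m : ℕ} (p q : Fin m → Fin n) : HV n m → HV n m → Prop
  | .v1 i, .f i' => i = i'
  | .v2 i, .f i' => i = i'
  | .a i, .b i' => i = i'
  | .b i, .c i' => i = i'
  | .a i, .f i' => i = i'
  | .e1 j, .v1 i => p j = i ∨ q j = i
  | .e2 j, .v2 i => p j = i ∨ q j = i
  | _, _ => False

/-- The graph `H` constructed from `G`. -/
def bigH {n m : ℕ} (p q : Fin m → Fin n) : SimpleGraph (HV n m) :=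
  SimpleGraph.fromRel (hRel p q)

/-! Every semipaired dominating set of `H` spends two vertices on each gadget
`{a_i, b_i, c_i, f_i}`: `c_i` must be dominated from `{b_i, c_i}`, and the partner of that
vertex is within distance two of it, hence in the same gadget. The rest of a budget of `2n + 2k`
leaves at most `k` vertices on one of the two copies `V_l ∪ E_l` of `G`, and dominating the edge
vertices of that copy amounts to covering the edges of `G`. Conversely, for a cover `C` the pairs
`b_i f_i` (through `a_i`) and `v_i^1 v_i^2` for `i ∈ C` (through `f_i`) form such a set. -/

/-- `inl i` for the gadget `{a_i, b_i, c_i, f_i}`, `inr false` for `V_1 ∪ E_1` and `inr true`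
for `V_2 ∪ E_2`. -/
def HV.block {n m : ℕ} : HV n m → Fin n ⊕ Bool
  | .a i | .b i | .c i | .f i => .inl i
  | .v1 _ | .e1 _ => .inr false
  | .v2 _ | .e2 _ => .inr true

def HV.index {n m : ℕ} (p : Fin m → Fin n) : HV n m → Fin n
  | .v1 i | .v2 i | .a i | .b i | .c i | .f i => i
  | .e1 j | .e2 j => p j

def HV.edge {n m : ℕ} : Bool → Fin m → HV n m
  | false, j => .e1 j
  | true, j => .e2 j

-- `b_i, f_i` have the common neighbour `a_i`, and `v_i^1, v_i^2` the common neighbour `f_i`.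
def HV.partner {n m : ℕ} : HV n m → HV n m
  | .b i => .f i
  | .f i => .b i
  | .v1 i => .v2 i
  | .v2 i => .v1 i
  | x => x

open Finset

section bigH

variable {n m : ℕ} {p q : Fin m → Fin n} {u : HV n m} {i : Fin n} {j : Fin m}

lemma eq_of_bigH_adj_c (h : (bigH p q).Adj u (.c i)) : u = .b i := by
  cases u <;> simp_all [bigH, hRel]

lemma eq_of_bigH_adj_b (h : (bigH p q).Adj u (.b i)) : u = .a i ∨ u = .c i := by
  cases u <;> simp_all [bigH, hRel]

lemma eq_of_bigH_adj_a (h : (bigH p q).Adj u (.a i)) : u = .b i ∨ u = .f i := by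
  cases u <;> simp_all [bigH, hRel]

lemma block_eq_and_index_of_bigH_adj_edge {l : Bool} (h : (bigH p q).Adj u (.edge l j)) :
    u.block = .inr l ∧ (u.index p = p j ∨ u.index p = q j) := by
  cases l <;> cases u <;> simp_all [bigH, hRel, HV.edge, HV.block, HV.index, eq_comm]

lemma block_eq_of_near_b_or_c {w : HV n m} (hw : w = .b i ∨ w = .c i)
    (h : (bigH p q).Adj w u ∨ ∃ x, (bigH p q).Adj w x ∧ (bigH p q).Adj u x) :
    u.block = .inl i := by
  have nbr : ∀ x, (bigH p q).Adj w x → x = .a i ∨ x = .b i ∨ x = .c i := by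
    intro x hx
    rcases hw with rfl | rfl
    · rcases eq_of_bigH_adj_b hx.symm with rfl | rfl <;> simp
    · simp [eq_of_bigH_adj_c hx.symm]
  rcases h with h | ⟨x, hwx, hux⟩
  · rcases nbr u h with rfl | rfl | rfl <;> rfl
  · rcases nbr x hwx with rfl | rfl | rfl
    · rcases eq_of_bigH_adj_a hux with rfl | rfl <;> rfl
    · rcases eq_of_bigH_adj_b hux with rfl | rfl <;> rfl
    · rw [eq_of_bigH_adj_c hux]; rfl

lemma two_le_card_filter_block_inl {D : Finset (HV n m)} (hD : IsSemiPD (bigH p q) D)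
    (i : Fin n) : 2 ≤ #{x ∈ D | x.block = .inl i} := by
  obtain ⟨hdom, π, hπ⟩ := hD
  obtain ⟨w, hwD, hw⟩ : ∃ w ∈ D, w = .b i ∨ w = .c i := by
    by_cases hc : HV.c i ∈ D
    · exact ⟨_, hc, .inr rfl⟩
    · obtain ⟨u, hu, hadj⟩ := hdom _ hc
      exact ⟨u, hu, .inl (eq_of_bigH_adj_c hadj)⟩
  obtain ⟨hπD, hπw, -, hnear⟩ := hπ w hwD
  have hwi : w.block = .inl i := by rcases hw with rfl | rfl <;> rfl
  refine one_lt_card.2 ⟨π w, ?_, w, ?_, hπw⟩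
  · simp [hπD, block_eq_of_near_b_or_c hw hnear]
  · simp [hwD, hwi]

lemma mem_or_mem_image_index_of_isDomSet {D : Finset (HV n m)}
    (hD : IsDomSet (bigH p q) D) (l : Bool) (j : Fin m) :
    p j ∈ {x ∈ D | x.block = .inr l}.image (HV.index p) ∨
      q j ∈ {x ∈ D | x.block = .inr l}.image (HV.index p) := by
  by_cases he : HV.edge l j ∈ D
  · exact .inl (mem_image.2 ⟨_, mem_filter.2 ⟨he, by cases l <;> rfl⟩, by cases l <;> rfl⟩)
  · obtain ⟨u, hu, hadj⟩ := hD _ he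
    obtain ⟨hb, hup | huq⟩ := block_eq_and_index_of_bigH_adj_edge hadj
    · exact .inl (mem_image.2 ⟨u, mem_filter.2 ⟨hu, hb⟩, hup⟩)
    · exact .inr (mem_image.2 ⟨u, mem_filter.2 ⟨hu, hb⟩, huq⟩)

end bigH

lemma card_eq_sum_card_filter_block {n m : ℕ} (D : Finset (HV n m)) :
    #D = ∑ i, #{x ∈ D | x.block = .inl i} +
      (#{x ∈ D | x.block = .inr false} + #{x ∈ D | x.block = .inr true}) := by
  rw [card_eq_sum_card_fiberwise (f := HV.block) (t := univ) fun _ _ => mem_univ _,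
    Fintype.sum_sum_type, Fintype.sum_bool]
  ring

lemma exists_cover_of_isSemiPD {n m : ℕ} {p q : Fin m → Fin n} {D : Finset (HV n m)} {k : ℕ}
    (hD : IsSemiPD (bigH p q) D) (hDk : #D ≤ 2 * n + 2 * k) :
    ∃ C : Finset (Fin n), (∀ j, p j ∈ C ∨ q j ∈ C) ∧ #C ≤ k := by
  have hgadgets : 2 * n ≤ ∑ i, #{x ∈ D | x.block = .inl i} := by
    simpa [mul_comm] using
      sum_le_sum (s := univ) fun i _ => two_le_card_filter_block_inl hD i
  obtain ⟨l, hl⟩ : ∃ l, #{x ∈ D | x.block = .inr l} ≤ k := by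
    by_contra! h
    have := h false
    have := h true
    rw [card_eq_sum_card_filter_block] at hDk
    omega
  exact ⟨_, mem_or_mem_image_index_of_isDomSet hD.1 l, card_image_le.trans hl⟩

def semiPDSetOfCover {n m : ℕ} (C : Finset (Fin n)) : Finset (HV n m) :=
  univ.image .b ∪ univ.image .f ∪ C.image .v1 ∪ C.image .v2

lemma card_semiPDSetOfCover_le {n m : ℕ} (C : Finset (Fin n)) :
    #(semiPDSetOfCover (m := m) C) ≤ 2 * n + 2 * #C := by
  grw [semiPDSetOfCover, card_union_le, card_union_le, card_union_le, card_image_le,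
    card_image_le, card_image_le, card_image_le]
  simp
  omega

lemma isSemiPD_semiPDSetOfCover {n m : ℕ} {p q : Fin m → Fin n} {C : Finset (Fin n)}
    (hC : ∀ j, p j ∈ C ∨ q j ∈ C) : IsSemiPD (bigH p q) (semiPDSetOfCover C) := by
  refine ⟨fun v hv => ?_, HV.partner, fun v hv => ?_⟩
  · cases v with
    | v1 i | v2 i => exact ⟨.f i, by simp [semiPDSetOfCover], by simp [bigH, hRel]⟩
    | a i | c i => exact ⟨.b i, by simp [semiPDSetOfCover], by simp [bigH, hRel]⟩
    | b i | f i => simp [semiPDSetOfCover] at hv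
    | e1 j =>
      rcases hC j with h | h
      · exact ⟨.v1 (p j), by simp [semiPDSetOfCover, h], by simp [bigH, hRel]⟩
      · exact ⟨.v1 (q j), by simp [semiPDSetOfCover, h], by simp [bigH, hRel]⟩
    | e2 j =>
      rcases hC j with h | h
      · exact ⟨.v2 (p j), by simp [semiPDSetOfCover, h], by simp [bigH, hRel]⟩
      · exact ⟨.v2 (q j), by simp [semiPDSetOfCover, h], by simp [bigH, hRel]⟩
  · simp only [semiPDSetOfCover, mem_union, mem_image, mem_univ, true_and] at hv
    rcases hv with ((⟨i, rfl⟩ | ⟨i, rfl⟩) | ⟨i, hi, rfl⟩) | ⟨i, hi, rfl⟩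
    all_goals refine ⟨by simp [semiPDSetOfCover, HV.partner, *], by simp [HV.partner], rfl,
      .inr ?_⟩
    exacts [⟨.a i, by simp [bigH, hRel], by simp [HV.partner, bigH, hRel]⟩,
      ⟨.a i, by simp [bigH, hRel], by simp [HV.partner, bigH, hRel]⟩,
      ⟨.f i, by simp [bigH, hRel], by simp [HV.partner, bigH, hRel]⟩,
      ⟨.f i, by simp [bigH, hRel], by simp [HV.partner, bigH, hRel]⟩]

theorem vertexCover_iff_semiPD_bigH_general {n m : ℕ}
    (G : SimpleGraph (Fin n)) (p q : Fin m → Fin n)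
    (hpq : ∀ j : Fin m, G.Adj (p j) (q j))
    (hsurj : ∀ x y : Fin n, G.Adj x y →
      ∃ j : Fin m, (p j = x ∧ q j = y) ∨ (p j = y ∧ q j = x))
    (k : ℕ) :
    (∃ C : Finset (Fin n), (∀ x y : Fin n, G.Adj x y → x ∈ C ∨ y ∈ C) ∧ C.card ≤ k) ↔
    (∃ D : Finset (HV n m), IsSemiPD (bigH p q) D ∧ D.card ≤ 2 * n + 2 * k) := by
  constructor
  · rintro ⟨C, hC, hCk⟩
    exact ⟨semiPDSetOfCover C, isSemiPD_semiPDSetOfCover fun j => hC _ _ (hpq j),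
      (card_semiPDSetOfCover_le C).trans (by omega)⟩
  · rintro ⟨D, hD, hDk⟩
    obtain ⟨C, hC, hCk⟩ := exists_cover_of_isSemiPD hD hDk
    refine ⟨C, fun x y hxy => ?_, hCk⟩
    obtain ⟨j, ⟨rfl, rfl⟩ | ⟨rfl, rfl⟩⟩ := hsurj x y hxy
    · exact hC j
    · exact (hC j).symm

/-- Let `H` be the graph constructed from a nontrivial graph `G = (V, E)` with
`V = {v_1,…,v_n}` and `E = {e_1,…,e_m}` (enumerated by endpoint functions `p, q`).
For every positive integer `k`, `G` has a vertex cover of cardinality at most `k`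
iff `H` has a semipaired dominating set of cardinality at most `2n + 2k`. -/
theorem vertexCover_iff_semiPD_bigH {n m : ℕ} (hn : 2 ≤ n)
    (G : SimpleGraph (Fin n)) (p q : Fin m → Fin n)
    (hpq : ∀ j : Fin m, G.Adj (p j) (q j))
    (hsurj : ∀ x y : Fin n, G.Adj x y →
      ∃ j : Fin m, (p j = x ∧ q j = y) ∨ (p j = y ∧ q j = x))
    (hinj : Function.Injective fun j : Fin m => s(p j, q j))
    (k : ℕ) (hk : 0 < k) :
    (∃ C : Finset (Fin n), (∀ x y : Fin n, G.Adj x y → x ∈ C ∨ y ∈ C) ∧ C.card ≤ k) ↔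
    (∃ D : Finset (HV n m), IsSemiPD (bigH p q) D ∧ D.card ≤ 2 * n + 2 * k) :=
  vertexCover_iff_semiPD_bigH_general G p q hpq hsurj k
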